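/- arXiv:1701.04165 — 2 statements merged into one kernel-verified Lean document; each statement's English description precedes it below -/
import Mathlib

section
/- For every positive integer m, there exists a binary [6m−2, 2, 4m−2] LCD code; hence LCD[6m−2,2] = ⌊2(6m−2)/3⌋. -/
open Matrix

/-- The dual code of a binary linear code `C ⊆ GF(2)^n` under the standard bilinear form. -/
def dualCode {n : ℕ} (C : Submodule (ZMod 2) (Fin n → ZMod 2)) :
    Submodule (ZMod 2) (Fin n → ZMod 2) where
  carrier := {v | ∀ c ∈ C, v ⬝ᵥ c = 0}
  add_mem' := by
    intro a b ha hb c hc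
    simp [add_dotProduct, ha c hc, hb c hc]
  zero_mem' := by
    intro c hc
    simp
  smul_mem' := by
    intro r a ha c hc
    simp [smul_dotProduct, ha c hc]

/-- A linear code is LCD if it intersects its dual trivially. -/
def isLCD {n : ℕ} (C : Submodule (ZMod 2) (Fin n → ZMod 2)) : Prop :=
  C ⊓ dualCode C = ⊥

/-- `C` has minimum distance `d`: every nonzero codeword has Hamming weight at least `d`,
and some nonzero codeword has Hamming weight exactly `d`. -/
def hasMinDist {n : ℕ} (C : Submodule (ZMod 2) (Fin n → ZMod 2)) (d : ℕ) : Prop :=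
  (∀ v ∈ C, v ≠ 0 → d ≤ hammingNorm v) ∧ ∃ v ∈ C, v ≠ 0 ∧ hammingNorm v = d

/-- `LCDmax n k` is the largest minimum distance among binary `[n,k]` LCD codes. -/
noncomputable def LCDmax (n k : ℕ) : ℕ :=
  sSup {d | ∃ C : Submodule (ZMod 2) (Fin n → ZMod 2),
    Module.finrank (ZMod 2) ↥C = k ∧ hasMinDist C d ∧ isLCD C}

/-!
At every coordinate at most two of `u i`, `v i`, `u i + v i` are nonzero, so the three nonzero
codewords of a two-dimensional binary code have total weight at most `2n`, whence `3d ≤ 2n`; for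
`n = 6m - 2` this is `d ≤ 4m - 2`. The witness rows have odd weights `4m - 1` and an overlap of
even size `2m`, so their Gram matrix is the identity: this makes them independent and the code
LCD, while `u`, `v`, `u + v` have weights `4m - 1`, `4m - 1`, `4m - 2`.
-/

theorem hammingNorm_add_hammingNorm_add_hammingNorm_add_le {ι : Type*} [Fintype ι]
    (u v : ι → ZMod 2) :
    hammingNorm u + hammingNorm v + hammingNorm (u + v) ≤ 2 * Fintype.card ι := by
  have pointwise : ∀ x y : ZMod 2,
      (if x ≠ 0 then 1 else 0) + (if y ≠ 0 then 1 else 0) + (if x + y ≠ 0 then 1 else 0) ≤ 2 := by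
    decide
  simp only [hammingNorm, Finset.card_filter, ← Finset.sum_add_distrib]
  calc _ ≤ ∑ _i : ι, 2 := Finset.sum_le_sum fun i _ => pointwise (u i) (v i)
    _ = 2 * Fintype.card ι := by simp [mul_comm]

theorem three_mul_le_two_mul_of_finrank_eq_two {n d : ℕ}
    (C : Submodule (ZMod 2) (Fin n → ZMod 2)) (hC : Module.finrank (ZMod 2) C = 2)
    (hd : ∀ v ∈ C, v ≠ 0 → d ≤ hammingNorm v) : 3 * d ≤ 2 * n := by
  let b := Module.finBasisOfFinrankEq (ZMod 2) C hC
  have hli : LinearIndependent (ZMod 2) ![b 0, b 1] := by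
    convert b.linearIndependent
    ext i
    fin_cases i <;> rfl
  have hne : b 0 ≠ 0 ∧ b 1 ≠ 0 ∧ b 0 + b 1 ≠ 0 := by
    refine ⟨hli.ne_zero 0, hli.ne_zero 1, fun h => ?_⟩
    simpa using LinearIndependent.pair_iff.mp hli 1 1 (by simpa using h)
  have hd' (x : C) (hx : x ≠ 0) : d ≤ hammingNorm (x : Fin n → ZMod 2) :=
    hd x x.2 (by simpa using hx)
  have h0 := hd' _ hne.1
  have h1 := hd' _ hne.2.1
  have h01 := hd' _ hne.2.2
  have := hammingNorm_add_hammingNorm_add_hammingNorm_add_le (b 0 : Fin n → ZMod 2) (b 1)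
  simp only [Submodule.coe_add, Fintype.card_fin] at h01 this
  omega

theorem eq_zero_or_eq_or_eq_or_eq_add_of_mem_span_pair {M : Type*} [AddCommGroup M]
    [Module (ZMod 2) M] {u v w : M} (hw : w ∈ Submodule.span (ZMod 2) {u, v}) :
    w = 0 ∨ w = u ∨ w = v ∨ w = u + v := by
  obtain ⟨x, y, rfl⟩ := Submodule.mem_span_pair.mp hw
  have zmod_two : ∀ z : ZMod 2, z = 0 ∨ z = 1 := by decide
  rcases zmod_two x with rfl | rfl <;> rcases zmod_two y with rfl | rfl <;> simp

theorem hasMinDist_span_pair {n d : ℕ} {u v : Fin n → ZMod 2} (hd : 0 < d)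
    (hu : d ≤ hammingNorm u) (hv : d ≤ hammingNorm v) (huv : hammingNorm (u + v) = d) :
    hasMinDist (Submodule.span (ZMod 2) {u, v}) d := by
  refine ⟨fun w hw hw0 => ?_, u + v, ?_, ?_, huv⟩
  · rcases eq_zero_or_eq_or_eq_or_eq_add_of_mem_span_pair hw with rfl | rfl | rfl | rfl
    exacts [absurd rfl hw0, hu, hv, huv.ge]
  · exact Submodule.add_mem _ (Submodule.subset_span (by simp)) (Submodule.subset_span (by simp))
  · rw [← hammingNorm_ne_zero_iff, huv]
    exact hd.ne'

section OrthonormalPair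

variable {R ι : Type*} [CommRing R] [Fintype ι] {u v : ι → R}

theorem smul_add_smul_dotProduct_eq (hu : u ⬝ᵥ u = 1) (hv : v ⬝ᵥ v = 1) (huv : u ⬝ᵥ v = 0)
    (x y : R) : (x • u + y • v) ⬝ᵥ u = x ∧ (x • u + y • v) ⬝ᵥ v = y := by
  simp [add_dotProduct, smul_dotProduct, hu, hv, huv, dotProduct_comm v u]

theorem linearIndependent_pair_of_dotProduct (hu : u ⬝ᵥ u = 1) (hv : v ⬝ᵥ v = 1)
    (huv : u ⬝ᵥ v = 0) : LinearIndependent R ![u, v] :=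
  LinearIndependent.pair_iff.mpr fun x y h => by
    obtain ⟨hx, hy⟩ := smul_add_smul_dotProduct_eq hu hv huv x y
    rw [h, zero_dotProduct] at hx hy
    exact ⟨hx.symm, hy.symm⟩

theorem finrank_span_pair_of_dotProduct [Nontrivial R] (hu : u ⬝ᵥ u = 1) (hv : v ⬝ᵥ v = 1)
    (huv : u ⬝ᵥ v = 0) : Module.finrank R (Submodule.span R {u, v}) = 2 := by
  rw [← Matrix.range_cons_cons_empty u v ![],
    finrank_span_eq_card (linearIndependent_pair_of_dotProduct hu hv huv), Fintype.card_fin]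

end OrthonormalPair

theorem isLCD_span_pair_of_dotProduct {n : ℕ} {u v : Fin n → ZMod 2} (hu : u ⬝ᵥ u = 1)
    (hv : v ⬝ᵥ v = 1) (huv : u ⬝ᵥ v = 0) : isLCD (Submodule.span (ZMod 2) {u, v}) := by
  rw [isLCD, eq_bot_iff]
  rintro w ⟨hwC, hwD⟩
  obtain ⟨x, y, rfl⟩ := Submodule.mem_span_pair.mp hwC
  obtain ⟨hx, hy⟩ := smul_add_smul_dotProduct_eq hu hv huv x y
  rw [hwD u (Submodule.subset_span (by simp))] at hx
  rw [hwD v (Submodule.subset_span (by simp))] at hy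
  simp [← hx, ← hy]

section IndicatorVec

variable {ι : Type*} [DecidableEq ι]

def indicatorVec (s : Finset ι) : ι → ZMod 2 := fun i => if i ∈ s then 1 else 0

theorem hammingNorm_indicatorVec [Fintype ι] (s : Finset ι) :
    hammingNorm (indicatorVec s) = s.card := by
  simp [hammingNorm, indicatorVec]

theorem indicatorVec_dotProduct_indicatorVec [Fintype ι] (s t : Finset ι) :
    indicatorVec s ⬝ᵥ indicatorVec t = ((s ∩ t).card : ZMod 2) := by
  simp [dotProduct, indicatorVec, Finset.inter_comm]

theorem indicatorVec_add_indicatorVec (s t : Finset ι) :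
    indicatorVec s + indicatorVec t = indicatorVec (symmDiff s t) := by
  funext i
  by_cases hs : i ∈ s <;> by_cases ht : i ∈ t <;>
    simp [indicatorVec, Finset.mem_symmDiff, hs, ht]
  decide

end IndicatorVec

section Witness

variable (m : ℕ)

def lowerBlock : Finset (Fin (6 * m - 2)) := {i | (i : ℕ) < 4 * m - 1}

def upperBlock : Finset (Fin (6 * m - 2)) := {i | 2 * m - 1 ≤ (i : ℕ)}

def witnessCode : Submodule (ZMod 2) (Fin (6 * m - 2) → ZMod 2) :=
  Submodule.span (ZMod 2) {indicatorVec (lowerBlock m), indicatorVec (upperBlock m)}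

variable {m}

theorem upperBlock_eq_compl :
    upperBlock m = ({i | (i : ℕ) < 2 * m - 1} : Finset (Fin (6 * m - 2)))ᶜ := by
  ext i
  simp [upperBlock]

theorem lowerBlock_symmDiff_upperBlock :
    symmDiff (lowerBlock m) (upperBlock m) = (lowerBlock m ∩ upperBlock m)ᶜ := by
  ext i
  simp only [Finset.mem_symmDiff, Finset.mem_compl, Finset.mem_inter, lowerBlock, upperBlock,
    Finset.mem_filter, Finset.mem_univ, true_and]
  omega

theorem card_lowerBlock (hm : 1 ≤ m) : (lowerBlock m).card = 4 * m - 1 := by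
  rw [lowerBlock, Fin.card_filter_val_lt]
  omega

theorem card_upperBlock (hm : 1 ≤ m) : (upperBlock m).card = 4 * m - 1 := by
  rw [upperBlock_eq_compl, Finset.card_compl, Fin.card_filter_val_lt, Fintype.card_fin]
  omega

theorem card_lowerBlock_inter_upperBlock (hm : 1 ≤ m) :
    (lowerBlock m ∩ upperBlock m).card = 2 * m := by
  have hsub : ({i | (i : ℕ) < 2 * m - 1} : Finset (Fin (6 * m - 2))) ⊆ lowerBlock m := by
    intro i
    simp only [lowerBlock, Finset.mem_filter, Finset.mem_univ, true_and]
    omega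
  rw [upperBlock_eq_compl, ← Finset.sdiff_eq_inter_compl, Finset.card_sdiff_of_subset hsub,
    card_lowerBlock hm, Fin.card_filter_val_lt]
  omega

theorem card_lowerBlock_symmDiff_upperBlock (hm : 1 ≤ m) :
    (symmDiff (lowerBlock m) (upperBlock m)).card = 4 * m - 2 := by
  rw [lowerBlock_symmDiff_upperBlock, Finset.card_compl, card_lowerBlock_inter_upperBlock hm,
    Fintype.card_fin]
  omega

theorem witnessCode_spec (hm : 1 ≤ m) :
    Module.finrank (ZMod 2) (witnessCode m) = 2 ∧ hasMinDist (witnessCode m) (4 * m - 2) ∧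
      isLCD (witnessCode m) := by
  unfold witnessCode
  set u := indicatorVec (lowerBlock m)
  set v := indicatorVec (upperBlock m)
  have hu : u ⬝ᵥ u = 1 := by
    rw [indicatorVec_dotProduct_indicatorVec, Finset.inter_self, card_lowerBlock hm,
      ZMod.natCast_eq_one_iff_odd]
    exact ⟨2 * m - 1, by omega⟩
  have hv : v ⬝ᵥ v = 1 := by
    rw [indicatorVec_dotProduct_indicatorVec, Finset.inter_self, card_upperBlock hm,
      ZMod.natCast_eq_one_iff_odd]
    exact ⟨2 * m - 1, by omega⟩
  have huv : u ⬝ᵥ v = 0 := by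
    rw [indicatorVec_dotProduct_indicatorVec, card_lowerBlock_inter_upperBlock hm,
      ZMod.natCast_eq_zero_iff_even]
    exact even_two_mul m
  have hwt_u : hammingNorm u = 4 * m - 1 := by rw [hammingNorm_indicatorVec, card_lowerBlock hm]
  have hwt_v : hammingNorm v = 4 * m - 1 := by rw [hammingNorm_indicatorVec, card_upperBlock hm]
  have hwt_uv : hammingNorm (u + v) = 4 * m - 2 := by
    rw [indicatorVec_add_indicatorVec, hammingNorm_indicatorVec,
      card_lowerBlock_symmDiff_upperBlock hm]
  exact ⟨finrank_span_pair_of_dotProduct hu hv huv,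
    hasMinDist_span_pair (by omega) (by omega) (by omega) hwt_uv,
    isLCD_span_pair_of_dotProduct hu hv huv⟩

end Witness

/-- For every positive integer `m` there is a binary `[6m−2, 2, 4m−2]` LCD code;
hence `LCD[6m−2, 2] = ⌊2(6m−2)/3⌋`. -/
theorem lcd_6m_sub_two (m : ℕ) (hm : 1 ≤ m) :
    (∃ C : Submodule (ZMod 2) (Fin (6 * m - 2) → ZMod 2),
      Module.finrank (ZMod 2) ↥C = 2 ∧ hasMinDist C (4 * m - 2) ∧ isLCD C) ∧
    LCDmax (6 * m - 2) 2 = 2 * (6 * m - 2) / 3 := by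
  have hex : ∃ C : Submodule (ZMod 2) (Fin (6 * m - 2) → ZMod 2),
      Module.finrank (ZMod 2) ↥C = 2 ∧ hasMinDist C (4 * m - 2) ∧ isLCD C :=
    ⟨witnessCode m, witnessCode_spec hm⟩
  refine ⟨hex, ?_⟩
  rw [LCDmax, show 2 * (6 * m - 2) / 3 = 4 * m - 2 by omega]
  refine IsGreatest.csSup_eq ⟨hex, ?_⟩
  rintro d ⟨C, hC, hd, -⟩
  have := three_mul_le_two_mul_of_finrank_eq_two C hC hd.1
  omega
end

section
/- For every positive even integer i, there is no binary [3i−1, 2, 2i−1] LCD code, but there exists a binary [3i−1, 2, 2i−2] LCD code; hence LCD[3i−1,2] = 2i − 2 for i even. -/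
open Matrix

/-!
A binary code with basis `a, b` is LCD iff its Gram matrix over `𝔽₂` is nonsingular, i.e. iff
`wt a * wt b + wt (a * b)` is odd, where `a * b` is the indicator of `supp a ∩ supp b`.
If `a`, `b` and `a + b` all have weight at least `2i - 1` in length `3i - 1`, the parts of
`supp a ∪ supp b` lying in `a` only, in both, and in `b` only have sizes a permutation of
`(i, i, i - 1)`, and for even `i` this makes that number even. The code with parts
`(i - 1, i - 1, i + 1)`, spanned by two overlapping intervals, has minimum weight `2i - 2`
and is LCD.
-/

section BinaryVectors

variable {ι : Type*} [Fintype ι]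

lemma hammingNorm_eq_sum_val (v : ι → ZMod 2) : hammingNorm v = ∑ j, (v j).val := by
  have hval : ∀ x : ZMod 2, x.val = if x ≠ 0 then 1 else 0 := by decide
  simp only [hammingNorm, Finset.card_filter, hval]

lemma sum_eq_hammingNorm (v : ι → ZMod 2) : ∑ j, v j = (hammingNorm v : ZMod 2) := by
  simp [hammingNorm_eq_sum_val]

lemma dotProduct_eq_hammingNorm_mul (v w : ι → ZMod 2) :
    v ⬝ᵥ w = (hammingNorm (v * w) : ZMod 2) :=
  sum_eq_hammingNorm (v * w)

lemma dotProduct_self_eq_hammingNorm (v : ι → ZMod 2) :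
    v ⬝ᵥ v = (hammingNorm v : ZMod 2) := by
  have hidem : v * v = v := funext fun j => by
    have hpt : ∀ x : ZMod 2, x * x = x := by decide
    exact hpt (v j)
  rw [dotProduct_eq_hammingNorm_mul, hidem]

lemma hammingNorm_add_add_two_mul_hammingNorm_mul (v w : ι → ZMod 2) :
    hammingNorm (v + w) + 2 * hammingNorm (v * w) = hammingNorm v + hammingNorm w := by
  have hpt : ∀ x y : ZMod 2, (x + y).val + 2 * (x * y).val = x.val + y.val := by decide
  simp only [hammingNorm_eq_sum_val, Finset.mul_sum, ← Finset.sum_add_distrib, Pi.add_apply,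
    Pi.mul_apply, hpt]

lemma hammingNorm_add_add_hammingNorm_mul_le (v w : ι → ZMod 2) :
    hammingNorm (v + w) + hammingNorm (v * w) ≤ Fintype.card ι := by
  have hpt : ∀ x y : ZMod 2, (x + y).val + (x * y).val ≤ 1 := by decide
  rw [hammingNorm_eq_sum_val, hammingNorm_eq_sum_val, ← Finset.sum_add_distrib,
    ← Finset.card_univ, Finset.card_eq_sum_ones]
  exact Finset.sum_le_sum fun j _ => hpt (v j) (w j)

end BinaryVectors

lemma zmod_two_eq_zero_or_one : ∀ x : ZMod 2, x = 0 ∨ x = 1 := by decide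

lemma linearIndependent_pair_iff_zmod_two {M : Type*} [AddCommGroup M] [Module (ZMod 2) M]
    {a b : M} : LinearIndependent (ZMod 2) ![a, b] ↔ a ≠ 0 ∧ b ≠ 0 ∧ a + b ≠ 0 := by
  rw [LinearIndependent.pair_iff]
  constructor
  · intro h
    refine ⟨fun ha => ?_, fun hb => ?_, fun hab => ?_⟩
    · exact one_ne_zero (h 1 0 (by simp [ha])).1
    · exact one_ne_zero (h 0 1 (by simp [hb])).2
    · exact one_ne_zero (h 1 1 (by simpa using hab)).1
  · rintro ⟨ha, hb, hab⟩ s t hst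
    rcases zmod_two_eq_zero_or_one s with rfl | rfl <;>
      rcases zmod_two_eq_zero_or_one t with rfl | rfl <;> simp_all

lemma forall_mem_ne_zero_iff_of_basis {M : Type*} [AddCommGroup M] [Module (ZMod 2) M]
    {C : Submodule (ZMod 2) M} (B : Module.Basis (Fin 2) (ZMod 2) C) (P : M → Prop) :
    (∀ v ∈ C, v ≠ 0 → P v) ↔ P (B 0) ∧ P (B 1) ∧ P (B 0 + B 1) := by
  have hB : ⇑B = ![B 0, B 1] := by
    ext i
    fin_cases i <;> rfl
  obtain ⟨h0, h1, h01⟩ := linearIndependent_pair_iff_zmod_two.1 (hB ▸ B.linearIndependent)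
  constructor
  · intro h
    refine ⟨h _ (B 0).2 (by exact_mod_cast h0), h _ (B 1).2 (by exact_mod_cast h1), ?_⟩
    exact h _ (C.add_mem (B 0).2 (B 1).2) (by exact_mod_cast h01)
  · rintro ⟨hP0, hP1, hP01⟩ v hv hv0
    have hrepr := B.sum_repr ⟨v, hv⟩
    rw [Fin.sum_univ_two] at hrepr
    generalize B.repr ⟨v, hv⟩ 0 = s, B.repr ⟨v, hv⟩ 1 = t at hrepr
    obtain rfl : v = s • (B 0 : M) + t • (B 1 : M) := by
      simpa using congrArg Subtype.val hrepr.symm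
    clear hrepr hv
    rcases zmod_two_eq_zero_or_one s with rfl | rfl <;>
      rcases zmod_two_eq_zero_or_one t with rfl | rfl <;>
      simp only [zero_smul, one_smul, zero_add, add_zero] at hv0 ⊢
    all_goals first | exact absurd rfl hv0 | assumption

section GramMatrix

variable {n : ℕ} {C : Submodule (ZMod 2) (Fin n → ZMod 2)} {κ : Type*} [Fintype κ]

noncomputable def gramMatrix (B : Module.Basis κ (ZMod 2) C) : Matrix κ κ (ZMod 2) :=
  Matrix.of fun i j => (B i : Fin n → ZMod 2) ⬝ᵥ B j

lemma dotProduct_basis_eq_vecMul_gramMatrix (B : Module.Basis κ (ZMod 2) C) (x : C) (j : κ) :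
    (x : Fin n → ZMod 2) ⬝ᵥ B j = (B.repr x ᵥ* gramMatrix B) j := by
  conv_lhs => rw [← B.sum_repr x]
  simp only [Submodule.coe_sum, Submodule.coe_smul, sum_dotProduct, smul_dotProduct, smul_eq_mul]
  rfl

lemma mem_dualCode_iff_vecMul_gramMatrix_eq_zero (B : Module.Basis κ (ZMod 2) C) (x : C) :
    (x : Fin n → ZMod 2) ∈ dualCode C ↔ B.repr x ᵥ* gramMatrix B = 0 := by
  constructor
  · intro hx
    funext j
    rw [← dotProduct_basis_eq_vecMul_gramMatrix]
    exact hx _ (B j).2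
  · intro h c hc
    have hc' := congrArg Subtype.val (B.sum_repr ⟨c, hc⟩)
    simp only [Submodule.coe_sum, Submodule.coe_smul] at hc'
    rw [← hc']
    simp [dotProduct_sum, dotProduct_basis_eq_vecMul_gramMatrix, h]

theorem isLCD_iff_det_gramMatrix_ne_zero [DecidableEq κ] (B : Module.Basis κ (ZMod 2) C) :
    isLCD C ↔ (gramMatrix B).det ≠ 0 := by
  rw [Ne, ← Matrix.exists_vecMul_eq_zero_iff, isLCD, Submodule.eq_bot_iff]
  constructor
  · rintro h ⟨c, hc0, hc⟩
    have hc' : (B.equivFun.symm c : Fin n → ZMod 2) ∈ dualCode C := by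
      rwa [mem_dualCode_iff_vecMul_gramMatrix_eq_zero B, ← B.equivFun_apply,
        LinearEquiv.apply_symm_apply]
    have hzero := h _ ⟨(B.equivFun.symm c).2, hc'⟩
    exact hc0 (B.equivFun.symm.map_eq_zero_iff.1 (Subtype.ext hzero))
  · rintro h x ⟨hxC, hxD⟩
    by_contra hx0
    refine h ⟨B.repr ⟨x, hxC⟩, by simpa using hx0, ?_⟩
    exact (mem_dualCode_iff_vecMul_gramMatrix_eq_zero B ⟨x, hxC⟩).1 hxD

theorem isLCD_iff_odd_of_basis (B : Module.Basis (Fin 2) (ZMod 2) C) :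
    isLCD C ↔ Odd (hammingNorm (B 0 : Fin n → ZMod 2) * hammingNorm (B 1 : Fin n → ZMod 2) +
      hammingNorm ((B 0 : Fin n → ZMod 2) * (B 1 : Fin n → ZMod 2))) := by
  have hdet : ∀ x y z : ZMod 2, x * y - z * z = x * y + z := by decide
  rw [isLCD_iff_det_gramMatrix_ne_zero B, det_fin_two]
  simp only [gramMatrix, of_apply]
  rw [dotProduct_self_eq_hammingNorm, dotProduct_self_eq_hammingNorm,
    dotProduct_comm (B 1 : Fin n → ZMod 2), dotProduct_eq_hammingNorm_mul, hdet,
    ← Nat.not_even_iff_odd, ← ZMod.natCast_eq_zero_iff_even]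
  push_cast
  rfl

end GramMatrix

theorem not_isLCD_of_finrank_eq_two {i : ℕ} (heven : Even i)
    {C : Submodule (ZMod 2) (Fin (3 * i - 1) → ZMod 2)} (hC : Module.finrank (ZMod 2) C = 2)
    (hd : ∀ v ∈ C, v ≠ 0 → 2 * i - 1 ≤ hammingNorm v) : ¬ isLCD C := by
  let B := Module.finBasisOfFinrankEq (ZMod 2) C hC
  obtain ⟨ha, hb, hab⟩ := (forall_mem_ne_zero_iff_of_basis B _).1 hd
  have hsum := hammingNorm_add_add_two_mul_hammingNorm_mul (B 0 : Fin (3 * i - 1) → ZMod 2) (B 1)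
  have hlen := hammingNorm_add_add_hammingNorm_mul_le (B 0 : Fin (3 * i - 1) → ZMod 2) (B 1)
  rw [Fintype.card_fin] at hlen
  rw [Nat.even_iff] at heven
  rw [isLCD_iff_odd_of_basis B, Nat.odd_add, Nat.odd_mul, Nat.odd_iff, Nat.odd_iff, Nat.even_iff]
  -- the weights of `B 0`, `B 1` and their overlap are `(2i-1, 2i-1, i-1)`, `(2i-1, 2i, i)` or
  -- `(2i, 2i-1, i)`
  omega

def intervalVec (n l r : ℕ) : Fin n → ZMod 2 :=
  fun j => if l ≤ (j : ℕ) ∧ (j : ℕ) < r then 1 else 0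

lemma hammingNorm_intervalVec {n l r : ℕ} (hr : r ≤ n) :
    hammingNorm (intervalVec n l r) = r - l := by
  rw [hammingNorm_eq_sum_val]
  simp only [intervalVec, apply_ite ZMod.val, ZMod.val_one, ZMod.val_zero]
  rw [Fin.sum_univ_eq_sum_range (fun j => if l ≤ j ∧ j < r then 1 else 0) n, Finset.sum_boole]
  have hIco : (Finset.range n).filter (fun j => l ≤ j ∧ j < r) = Finset.Ico l r := by
    ext j
    simp only [Finset.mem_filter, Finset.mem_range, Finset.mem_Ico]
    omega
  rw [hIco, Nat.card_Ico, Nat.cast_id]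

lemma intervalVec_mul (n l r l' r' : ℕ) :
    intervalVec n l r * intervalVec n l' r' = intervalVec n (max l l') (min r r') := by
  funext j
  simp only [intervalVec, Pi.mul_apply]
  split_ifs <;> first | omega | simp

theorem exists_isLCD_finrank_eq_two {i : ℕ} (hi : 2 ≤ i) (heven : Even i) :
    ∃ C : Submodule (ZMod 2) (Fin (3 * i - 1) → ZMod 2),
      Module.finrank (ZMod 2) C = 2 ∧ hasMinDist C (2 * i - 2) ∧ isLCD C := by
  set a := intervalVec (3 * i - 1) 0 (2 * i - 2)
  set b := intervalVec (3 * i - 1) (i - 1) (3 * i - 1)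
  have hwa : hammingNorm a = 2 * i - 2 := by rw [hammingNorm_intervalVec (by omega)]; omega
  have hwb : hammingNorm b = 2 * i := by rw [hammingNorm_intervalVec le_rfl]; omega
  have hs : hammingNorm (a * b) = i - 1 := by
    rw [intervalVec_mul, hammingNorm_intervalVec (by omega)]; omega
  have hwab : hammingNorm (a + b) = 2 * i := by
    have := hammingNorm_add_add_two_mul_hammingNorm_mul a b
    omega
  have hli : LinearIndependent (ZMod 2) ![a, b] := by
    simp only [linearIndependent_pair_iff_zmod_two, ← hammingNorm_pos_iff, hwa, hwb, hwab]
    omega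
  let B := Module.Basis.span hli
  have hB0 : (B 0 : Fin (3 * i - 1) → ZMod 2) = a := by simp [B]
  have hB1 : (B 1 : Fin (3 * i - 1) → ZMod 2) = b := by simp [B]
  refine ⟨Submodule.span (ZMod 2) (Set.range ![a, b]), ?_, ⟨?_, a, ?_, ?_, hwa⟩, ?_⟩
  · rw [finrank_span_eq_card hli, Fintype.card_fin]
  · rw [forall_mem_ne_zero_iff_of_basis B, hB0, hB1, hwa, hwb, hwab]
    omega
  · exact Submodule.subset_span ⟨0, rfl⟩
  · rw [← hammingNorm_pos_iff, hwa]
    omega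
  · rw [Nat.even_iff] at heven
    rw [isLCD_iff_odd_of_basis B, hB0, hB1, hwa, hwb, hs, Nat.odd_add, Nat.odd_mul, Nat.odd_iff,
      Nat.odd_iff, Nat.even_iff]
    omega

/-- For every positive even integer `i`, there is no binary `[3i−1, 2, 2i−1]` LCD code, but
there is a binary `[3i−1, 2, 2i−2]` LCD code; hence `LCD[3i−1, 2] = 2i − 2` for even `i`. -/
theorem lcd_3i_sub_one_even (i : ℕ) (hi : 1 ≤ i) (heven : Even i) :
    (¬ ∃ C : Submodule (ZMod 2) (Fin (3 * i - 1) → ZMod 2),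
      Module.finrank (ZMod 2) ↥C = 2 ∧ hasMinDist C (2 * i - 1) ∧ isLCD C) ∧
    (∃ C : Submodule (ZMod 2) (Fin (3 * i - 1) → ZMod 2),
      Module.finrank (ZMod 2) ↥C = 2 ∧ hasMinDist C (2 * i - 2) ∧ isLCD C) ∧
    LCDmax (3 * i - 1) 2 = 2 * i - 2 := by
  have hi2 : 2 ≤ i := by
    obtain ⟨k, rfl⟩ := heven
    omega
  have hcode := exists_isLCD_finrank_eq_two hi2 heven
  refine ⟨fun ⟨_, hC, ⟨hd, _⟩, hlcd⟩ => not_isLCD_of_finrank_eq_two heven hC hd hlcd,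
    hcode, IsGreatest.csSup_eq ⟨hcode, ?_⟩⟩
  rintro d ⟨C, hC, ⟨hd, -⟩, hlcd⟩
  by_contra! hlt
  exact not_isLCD_of_finrank_eq_two heven hC
    (fun v hv hv0 => le_trans (by omega) (hd v hv hv0)) hlcd
end
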